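/- arXiv:1911.07155 — 2 statements merged into one kernel-verified Lean document; each statement's English description precedes it below -/
import Mathlib

section
/- With the setup of type D_n weights: let (λ₁, λ₂) be an interlacing pair. Then for all 1 ≤ i < j ≤ n-1, |λ₁(h_{β_{i,j}}) − λ₂(h_{β_{i,j}})| ≤ 2. -/
/-- The value `λ(h_a) + ⋯ + λ(h_b)` of a weight on a sum of consecutive simple coroots. -/
def hIcc (lam : ℕ → ℤ) (a b : ℕ) : ℤ := ∑ s ∈ Finset.Icc a b, lam s

/-- Pairing of a weight with the coroot of the type-A root `α_{i,j}` in type `D_n`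
(`α_{i,n} = α_i + ⋯ + α_{n-2} + α_n`); zero if `i > j`. -/
def hA (n : ℕ) (lam : ℕ → ℤ) (i j : ℕ) : ℤ :=
  if j < i then 0 else if j = n then hIcc lam i (n - 2) + lam n else hIcc lam i j

/-- Pairing of a weight with the coroot of `β_{i,j}`:
`λ(h_{β_{i,j}}) = λ(h_{i,n-1}) + λ(h_{j,n-2}) + λ(h_n)`. -/
def hBeta (n : ℕ) (lam : ℕ → ℤ) (i j : ℕ) : ℤ :=
  hIcc lam i (n - 1) + hIcc lam j (n - 2) + lam n

/-- An interlacing pair of type `D_n` weights (weights are `ℕ → ℤ`, with values on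
indices `1,…,n`; nonnegativity and the conditions (a)–(c) are built in). -/
def Interlacing (n : ℕ) (l1 l2 : ℕ → ℤ) : Prop :=
  (∀ i, 1 ≤ i → i ≤ n → 0 ≤ l1 i ∧ 0 ≤ l2 i ∧ l1 i + l2 i ≤ 1) ∧
  (0 < l1 (n - 1) + l1 n → l2 (n - 1) + l2 n = 0) ∧
  (0 < l2 (n - 1) + l2 n → l1 (n - 1) + l1 n = 0) ∧
  (∀ i j, 1 ≤ i → i < j → j ≤ n → ¬(i = n - 1 ∧ j = n) →
    (l1 i = 1 → l1 j = 1 → ∃ s, i < s ∧ s < j ∧ l2 s = 1) ∧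
    (l2 i = 1 → l2 j = 1 → ∃ s, i < s ∧ s < j ∧ l1 s = 1))

/-! `λ(h_{β_{i,j}})` is the sum of `λ` along the chain `i, …, n-2, n` plus its sum along the chain
`j, …, n-1` of the `D_n` Dynkin diagram. On each chain, an interlacing pair restricts to two
`0/1`-sequences with disjoint supports whose `1`s alternate, so their partial sums differ by at
most one. -/

lemma hIcc_succ_right (lam : ℕ → ℤ) {a b : ℕ} (h : a ≤ b + 1) :
    hIcc lam a (b + 1) = hIcc lam a b + lam (b + 1) :=
  Finset.sum_Icc_succ_top h lam

lemma hIcc_of_lt (lam : ℕ → ℤ) {a b : ℕ} (h : b < a) : hIcc lam a b = 0 := by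
  simp [hIcc, Finset.Icc_eq_empty_of_lt h]

lemma hIcc_congr {f g : ℕ → ℤ} {a b : ℕ} (h : ∀ s, a ≤ s → s ≤ b → f s = g s) :
    hIcc f a b = hIcc g a b :=
  Finset.sum_congr rfl fun s hs => h s (Finset.mem_Icc.1 hs).1 (Finset.mem_Icc.1 hs).2

def SeparatedOn (f g : ℕ → ℤ) (a b : ℕ) : Prop :=
  ∀ s t, a ≤ s → s < t → t ≤ b → f s = 1 → f t = 1 → ∃ u, s < u ∧ u < t ∧ g u = 1

lemma SeparatedOn.mono_right {f g : ℕ → ℤ} {a b c : ℕ} (h : SeparatedOn f g a b)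
    (hcb : c ≤ b) : SeparatedOn f g a c :=
  fun s t has hst htc => h s t has hst (htc.trans hcb)

def InterlacingOn (f g : ℕ → ℤ) (a b : ℕ) : Prop :=
  (∀ s, a ≤ s → s ≤ b → 0 ≤ f s ∧ 0 ≤ g s ∧ f s + g s ≤ 1) ∧
    SeparatedOn f g a b ∧ SeparatedOn g f a b

lemma InterlacingOn.symm {f g : ℕ → ℤ} {a b : ℕ} (h : InterlacingOn f g a b) :
    InterlacingOn g f a b :=
  ⟨fun s has hsb => by have := h.1 s has hsb; omega, h.2.2, h.2.1⟩

/-- Induction invariant: whenever the excess of `f` over `g` is one, the last nonzero entry is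
a `1` of `f`, so the next `1` of `f` must be preceded by a `1` of `g`. -/
lemma hIcc_sub_le_one_and_exists_last_one {f g : ℕ → ℤ} {a b : ℕ}
    (hv : ∀ s, a ≤ s → s ≤ b → 0 ≤ f s ∧ 0 ≤ g s ∧ f s + g s ≤ 1)
    (hsep : SeparatedOn f g a b) :
    hIcc f a b - hIcc g a b ≤ 1 ∧
      (hIcc f a b - hIcc g a b = 1 →
        ∃ t, a ≤ t ∧ t ≤ b ∧ f t = 1 ∧ ∀ s, t < s → s ≤ b → g s = 0) := by
  induction b with
  | zero =>
    rcases Nat.eq_zero_or_pos a with rfl | ha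
    · have := hv 0 le_rfl le_rfl
      simp only [hIcc, Finset.Icc_self, Finset.sum_singleton]
      exact ⟨by omega, fun hD => ⟨0, le_rfl, le_rfl, by omega, fun s h0 h1 => by omega⟩⟩
    · simp [hIcc_of_lt _ ha]
  | succ b ih =>
    obtain ⟨hle, hlast⟩ :=
      ih (fun s has hsb => hv s has (by omega)) (hsep.mono_right b.le_succ)
    rcases lt_or_ge (b + 1) a with hba | hab
    · simp [hIcc_of_lt _ hba]
    rw [hIcc_succ_right f hab, hIcc_succ_right g hab]
    obtain ⟨hf0, hg0, hfg⟩ := hv (b + 1) hab le_rfl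
    by_cases hf : f (b + 1) = 1
    · have hprev : hIcc f a b - hIcc g a b ≤ 0 := by
        by_contra! hpos
        obtain ⟨t, hat, htb, ht, hgt⟩ := hlast (by omega)
        obtain ⟨u, htu, hub, hu⟩ := hsep t (b + 1) hat (by omega) le_rfl ht hf
        have := hgt u htu (by omega)
        omega
      exact ⟨by omega, fun _ => ⟨b + 1, hab, le_rfl, hf, fun s h1 h2 => by omega⟩⟩
    · refine ⟨by omega, fun hD => ?_⟩
      obtain ⟨t, hat, htb, ht, hgt⟩ := hlast (by omega)
      refine ⟨t, hat, by omega, ht, fun s hts hsb => ?_⟩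
      rcases Nat.lt_or_ge s (b + 1) with hsb' | hsb'
      · exact hgt s hts (by omega)
      · obtain rfl : s = b + 1 := by omega
        omega

lemma InterlacingOn.abs_hIcc_sub_le_one {f g : ℕ → ℤ} {a b : ℕ} (h : InterlacingOn f g a b) :
    |hIcc f a b - hIcc g a b| ≤ 1 := by
  have hfg := (hIcc_sub_le_one_and_exists_last_one h.1 h.2.1).1
  have hgf := (hIcc_sub_le_one_and_exists_last_one h.symm.1 h.symm.2.1).1
  rw [abs_le]
  constructor <;> linarith

/-- The weight read along the path `1, …, n-2, n` of the `D_n` Dynkin diagram, with node `n`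
moved to position `n-1`. -/
def dnPath (n : ℕ) (lam : ℕ → ℤ) : ℕ → ℤ := Function.update lam (n - 1) (lam n)

lemma hBeta_eq_hIcc_dnPath_add_hIcc {n : ℕ} (lam : ℕ → ℤ) {i j : ℕ} (hi : i < j) (hj : j < n) :
    hBeta n lam i j = hIcc (dnPath n lam) i (n - 1) + hIcc lam j (n - 1) := by
  obtain ⟨m, rfl⟩ : ∃ m, n = m + 2 := ⟨n - 2, by omega⟩
  have hpath : hIcc (dnPath (m + 2) lam) i m = hIcc lam i m :=
    hIcc_congr fun s _ hs => Function.update_of_ne (by omega) _ _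
  have hnode : dnPath (m + 2) lam (m + 1) = lam (m + 2) := Function.update_self _ _ _
  simp only [hBeta, Nat.add_sub_cancel, show m + 2 - 1 = m + 1 by omega,
    hIcc_succ_right _ (show i ≤ m + 1 by omega), hIcc_succ_right _ (show j ≤ m + 1 by omega),
    hpath, hnode]
  ring

namespace Interlacing

variable {n : ℕ} {l1 l2 : ℕ → ℤ}

lemma symm (h : Interlacing n l1 l2) : Interlacing n l2 l1 :=
  ⟨fun i h1 h2 => by have := h.1 i h1 h2; omega, h.2.2.1, h.2.1,
    fun i j h1 h2 h3 h4 => (h.2.2.2 i j h1 h2 h3 h4).symm⟩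

lemma interlacingOn {j : ℕ} (h : Interlacing n l1 l2) (hj : 1 ≤ j) :
    InterlacingOn l1 l2 j (n - 1) :=
  ⟨fun s h1 h2 => h.1 s (by omega) (by omega),
    fun s t h1 h2 h3 => (h.2.2.2 s t (by omega) h2 (by omega) (by omega)).1,
    fun s t h1 h2 h3 => (h.2.2.2 s t (by omega) h2 (by omega) (by omega)).2⟩

/-- The `1` of `l2` that (c) provides between `s` and `n` cannot sit at `n-1`, which is off the
path, because of (b). -/
lemma separatedOn_dnPath {i : ℕ} (h : Interlacing n l1 l2) (hi : 1 ≤ i) :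
    SeparatedOn (dnPath n l1) (dnPath n l2) i (n - 1) := by
  intro s t his hst htn hs ht
  have hs' : l1 s = 1 := by rwa [dnPath, Function.update_of_ne (by omega)] at hs
  rcases Nat.lt_or_ge t (n - 1) with htn' | htn'
  · rw [dnPath, Function.update_of_ne (by omega)] at ht
    obtain ⟨u, hsu, hut, hu⟩ := (h.2.2.2 s t (by omega) hst (by omega) (by omega)).1 hs' ht
    exact ⟨u, hsu, hut, by rwa [dnPath, Function.update_of_ne (by omega)]⟩
  · obtain rfl : t = n - 1 := by omega
    rw [dnPath, Function.update_self] at ht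
    obtain ⟨u, hsu, hun, hu⟩ := (h.2.2.2 s n (by omega) (by omega) le_rfl (by omega)).1 hs' ht
    have hzero : l2 (n - 1) + l2 n = 0 :=
      h.2.1 (by have := h.1 (n - 1) (by omega) (by omega); omega)
    have hun' : u ≠ n - 1 := by
      rintro rfl
      have := h.1 n (by omega) le_rfl
      omega
    exact ⟨u, hsu, by omega, by rwa [dnPath, Function.update_of_ne hun']⟩

lemma interlacingOn_dnPath {i : ℕ} (h : Interlacing n l1 l2) (hi : 1 ≤ i) :
    InterlacingOn (dnPath n l1) (dnPath n l2) i (n - 1) := by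
  refine ⟨fun s h1 h2 => ?_, h.separatedOn_dnPath hi, h.symm.separatedOn_dnPath hi⟩
  by_cases hs : s = n - 1
  · subst hs
    simpa only [dnPath, Function.update_self] using h.1 n (by omega) le_rfl
  · simpa only [dnPath, Function.update_of_ne hs] using h.1 s (by omega) (by omega)

end Interlacing

theorem stmt2_general (n : ℕ) (l1 l2 : ℕ → ℤ) (h : Interlacing n l1 l2) :
    ∀ i j, 1 ≤ i → i < j → j ≤ n - 1 → |hBeta n l1 i j - hBeta n l2 i j| ≤ 2 := by
  intro i j hi hij hj
  rw [hBeta_eq_hIcc_dnPath_add_hIcc l1 hij (by omega),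
    hBeta_eq_hIcc_dnPath_add_hIcc l2 hij (by omega), add_sub_add_comm]
  calc _ ≤ |hIcc (dnPath n l1) i (n - 1) - hIcc (dnPath n l2) i (n - 1)|
          + |hIcc l1 j (n - 1) - hIcc l2 j (n - 1)| := abs_add_le _ _
    _ ≤ 1 + 1 := add_le_add (h.interlacingOn_dnPath hi).abs_hIcc_sub_le_one
          (h.interlacingOn (by omega)).abs_hIcc_sub_le_one
    _ = 2 := by norm_num

/-- For any interlacing pair in type `D_n`, `|λ₁(h_{β_{i,j}}) − λ₂(h_{β_{i,j}})| ≤ 2`. -/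
theorem stmt2 (n : ℕ) (hn : 4 ≤ n) (l1 l2 : ℕ → ℤ) (h : Interlacing n l1 l2) :
    ∀ i j, 1 ≤ i → i < j → j ≤ n - 1 → |hBeta n l1 i j - hBeta n l2 i j| ≤ 2 :=
  stmt2_general n l1 l2 h
end

section
/- Let (λ₁, λ₂) be an interlacing pair of type D_n weights with λ₁(h_{n-1}) + λ₁(h_n) = 0 = λ₂(h_{n-1}) + λ₂(h_n). Then for 1 ≤ i < j ≤ n-1, |λ₁(h_{β_{i,j}}) − λ₂(h_{β_{i,j}})| = 2 if and only if (λ₁ − λ₂)(h_{i,j-1}) = 0 and (λ₁ − λ₂)(h_{j,n-2}) = ±1, where (λ₁−λ₂)(h_{a,b}) denotes Σ_{s=a}^{b} (λ₁(h_s) − λ₂(h_s)) (equal to 0 when a > b). -/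
/-!
Once both weights vanish at `n-1` and `n`, `λ(h_{β_{i,j}}) = λ(h_{i,j-1}) + 2 λ(h_{j,n-2})`.
Interlacing says that along `1, …, n-1` the `1`'s of `λ₁` and of `λ₂` alternate, so on every
interval the difference `λ₁ - λ₂` sums to `-1`, `0` or `1`. With `x = (λ₁-λ₂)(h_{i,j-1})` and
`y = (λ₁-λ₂)(h_{j,n-2})` we thus have `|x + y| ≤ 1` and `|y| ≤ 1`, and under these constraints
`|x + 2y| = 2` happens exactly when `x = 0` and `|y| = 1`.
-/

def OnesSeparatedBy (f g : ℕ → ℤ) (a b : ℕ) : Prop :=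
  ∀ s t, a ≤ s → s < t → t ≤ b → f s = 1 → f t = 1 → ∃ u, s < u ∧ u < t ∧ g u = 1

lemma hIcc_self (l : ℕ → ℤ) (a : ℕ) : hIcc l a a = l a := by
  simp [hIcc]

lemma hIcc_succ_top (l : ℕ → ℤ) {a b : ℕ} (hab : a ≤ b + 1) :
    hIcc l a (b + 1) = hIcc l a b + l (b + 1) :=
  Finset.sum_Icc_succ_top hab l

lemma hIcc_eq_add (l : ℕ → ℤ) {a b c : ℕ} (hab : a ≤ b + 1) (hbc : b ≤ c) :
    hIcc l a c = hIcc l a b + hIcc l (b + 1) c := by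
  simp only [hIcc, ← Finset.Ico_add_one_right_eq_Icc]
  exact (Finset.sum_Ico_consecutive l hab (by omega)).symm

section Surplus

variable {f g : ℕ → ℤ} {a b : ℕ}

/-- Strengthened for the induction: the witness `t` is why separation rules out a next `1` of `f`
while the surplus is `1`. -/
lemma hIcc_sub_le_one_and_exists_last (hg : ∀ s, a ≤ s → s ≤ b → 0 ≤ g s)
    (hfg : ∀ s, a ≤ s → s ≤ b → f s + g s ≤ 1) (hsep : OnesSeparatedBy f g a b) :
    ∀ c, a ≤ c → c ≤ b → hIcc f a c - hIcc g a c ≤ 1 ∧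
      (hIcc f a c - hIcc g a c = 1 →
        ∃ t, a ≤ t ∧ t ≤ c ∧ f t = 1 ∧ ∀ s, t < s → s ≤ c → g s = 0) := by
  intro c hac
  induction c, hac using Nat.le_induction with
  | base =>
    intro hab
    have := hg a le_rfl hab
    have := hfg a le_rfl hab
    rw [hIcc_self, hIcc_self]
    exact ⟨by omega, fun _ => ⟨a, le_rfl, le_rfl, by omega, fun s hs hs' => by omega⟩⟩
  | succ c hac ih =>
    intro hcb
    obtain ⟨hle, hlast⟩ := ih (by omega)
    have hg1 := hg (c + 1) (by omega) hcb
    have hfg1 := hfg (c + 1) (by omega) hcb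
    rw [hIcc_succ_top f (by omega), hIcc_succ_top g (by omega)]
    by_cases hD : hIcc f a c - hIcc g a c = 1
    · obtain ⟨t, hat, htc, ht, hzero⟩ := hlast hD
      have hf1 : f (c + 1) ≠ 1 := fun hf1 => by
        obtain ⟨u, htu, huc, hu⟩ := hsep t (c + 1) hat (by omega) hcb ht hf1
        have := hzero u htu (by omega)
        omega
      refine ⟨by omega, fun hD' => ⟨t, hat, by omega, ht, fun s hts hsc => ?_⟩⟩
      rcases Nat.lt_or_ge c s with hcs | hsc'
      · obtain rfl : s = c + 1 := by omega
        omega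
      · exact hzero s hts hsc'
    · exact ⟨by omega, fun hD' =>
        ⟨c + 1, by omega, le_rfl, by omega, fun s hs hs' => by omega⟩⟩

lemma hIcc_sub_le_one (hg : ∀ s, a ≤ s → s ≤ b → 0 ≤ g s)
    (hfg : ∀ s, a ≤ s → s ≤ b → f s + g s ≤ 1) (hsep : OnesSeparatedBy f g a b) :
    hIcc f a b - hIcc g a b ≤ 1 := by
  rcases Nat.lt_or_ge b a with hba | hab
  · simp [hIcc, Finset.Icc_eq_empty_of_lt hba]
  · exact (hIcc_sub_le_one_and_exists_last hg hfg hsep b hab le_rfl).1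

lemma abs_hIcc_sub_le_one (hf : ∀ s, a ≤ s → s ≤ b → 0 ≤ f s)
    (hg : ∀ s, a ≤ s → s ≤ b → 0 ≤ g s) (hfg : ∀ s, a ≤ s → s ≤ b → f s + g s ≤ 1)
    (hsep_fg : OnesSeparatedBy f g a b) (hsep_gf : OnesSeparatedBy g f a b) :
    |hIcc f a b - hIcc g a b| ≤ 1 := by
  have hgf : ∀ s, a ≤ s → s ≤ b → g s + f s ≤ 1 := fun s h h' => by
    linarith [hfg s h h']
  rw [abs_le]
  exact ⟨by linarith [hIcc_sub_le_one hf hgf hsep_gf], hIcc_sub_le_one hg hfg hsep_fg⟩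

end Surplus

lemma Interlacing.abs_hIcc_sub_le_one {n : ℕ} {l1 l2 : ℕ → ℤ} (h : Interlacing n l1 l2)
    {a b : ℕ} (ha : 1 ≤ a) (hb : b ≤ n - 1) :
    |hIcc l1 a b - hIcc l2 a b| ≤ 1 := by
  obtain ⟨hval, -, -, hsep⟩ := h
  refine _root_.abs_hIcc_sub_le_one (fun s h h' => (hval s (by omega) (by omega)).1)
    (fun s h h' => (hval s (by omega) (by omega)).2.1)
    (fun s h h' => (hval s (by omega) (by omega)).2.2) ?_ ?_
  · exact fun s t hs hst ht => (hsep s t (by omega) hst (by omega) (by omega)).1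
  · exact fun s t hs hst ht => (hsep s t (by omega) hst (by omega) (by omega)).2

lemma hBeta_eq (n : ℕ) (l : ℕ → ℤ) {i j : ℕ} (hij : i ≤ j) (hj : 1 ≤ j) (hjn : j ≤ n - 1) :
    hBeta n l i j = hIcc l i (j - 1) + 2 * hIcc l j (n - 2) + l (n - 1) + l n := by
  have htop : hIcc l i (n - 1) = hIcc l i (n - 2) + l (n - 1) := by
    rw [show n - 1 = n - 2 + 1 by omega, hIcc_succ_top l (by omega)]
  have hsplit : hIcc l i (n - 2) = hIcc l i (j - 1) + hIcc l j (n - 2) := by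
    rw [hIcc_eq_add l (b := j - 1) (by omega) (by omega), Nat.sub_add_cancel hj]
  rw [hBeta, htop, hsplit]
  ring

lemma abs_add_two_mul_eq_two_iff {x y : ℤ} (hxy : |x + y| ≤ 1) (hy : |y| ≤ 1) :
    |x + 2 * y| = 2 ↔ x = 0 ∧ |y| = 1 := by
  rw [abs_le] at hxy hy
  rw [abs_eq (by norm_num), abs_eq (by norm_num)]
  omega

theorem stmt3_general (n : ℕ) (l1 l2 : ℕ → ℤ) (h : Interlacing n l1 l2)
    (h1 : l1 (n - 1) + l1 n = 0) (h2 : l2 (n - 1) + l2 n = 0) :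
    ∀ i j, 1 ≤ i → i < j → j ≤ n - 1 →
      (|hBeta n l1 i j - hBeta n l2 i j| = 2 ↔
        (hIcc l1 i (j - 1) - hIcc l2 i (j - 1) = 0 ∧
          |hIcc l1 j (n - 2) - hIcc l2 j (n - 2)| = 1)) := by
  intro i j hi hij hjn
  have hval := h.1
  obtain ⟨h1', h1n⟩ := (add_eq_zero_iff_of_nonneg (hval (n - 1) (by omega) (by omega)).1
    (hval n (by omega) le_rfl).1).1 h1
  obtain ⟨h2', h2n⟩ := (add_eq_zero_iff_of_nonneg (hval (n - 1) (by omega) (by omega)).2.1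
    (hval n (by omega) le_rfl).2.1).1 h2
  have hdiff : hBeta n l1 i j - hBeta n l2 i j =
      (hIcc l1 i (j - 1) - hIcc l2 i (j - 1)) +
        2 * (hIcc l1 j (n - 2) - hIcc l2 j (n - 2)) := by
    rw [hBeta_eq n l1 hij.le (by omega) hjn, hBeta_eq n l2 hij.le (by omega) hjn,
      h1', h1n, h2', h2n]
    ring
  have hwhole : |(hIcc l1 i (j - 1) - hIcc l2 i (j - 1)) +
      (hIcc l1 j (n - 2) - hIcc l2 j (n - 2))| ≤ 1 := by
    have := h.abs_hIcc_sub_le_one hi (b := n - 2) (by omega)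
    rwa [hIcc_eq_add l1 (b := j - 1) (by omega) (by omega),
      hIcc_eq_add l2 (b := j - 1) (by omega) (by omega), Nat.sub_add_cancel (by omega),
      add_sub_add_comm] at this
  rw [hdiff]
  exact abs_add_two_mul_eq_two_iff hwhole (h.abs_hIcc_sub_le_one (by omega) (by omega))

/-- If both weights of an interlacing pair vanish on `{n-1, n}`, then
`|λ₁(h_{β_{i,j}}) − λ₂(h_{β_{i,j}})| = 2` iff `(λ₁−λ₂)(h_{i,j-1}) = 0` and
`(λ₁−λ₂)(h_{j,n-2}) = ±1`. -/
theorem stmt3 (n : ℕ) (hn : 4 ≤ n) (l1 l2 : ℕ → ℤ) (h : Interlacing n l1 l2)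
    (h1 : l1 (n - 1) + l1 n = 0) (h2 : l2 (n - 1) + l2 n = 0) :
    ∀ i j, 1 ≤ i → i < j → j ≤ n - 1 →
      (|hBeta n l1 i j - hBeta n l2 i j| = 2 ↔
        (hIcc l1 i (j - 1) - hIcc l2 i (j - 1) = 0 ∧
          |hIcc l1 j (n - 2) - hIcc l2 j (n - 2)| = 1)) :=
  stmt3_general n l1 l2 h h1 h2
end
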